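/- arXiv:1307.4101 — 5 statements merged into one kernel-verified Lean document; each statement's English description precedes it below -/
import Mathlib

section
/- If X, Y, Z are ±1-valued random variables on a common probability space, then -1 ≤ E(XY) + E(YZ) + E(XZ). -/
open MeasureTheory

lemma int_prod {Ω : Type} [MeasureSpace Ω] [IsProbabilityMeasure (volume : Measure Ω)]
    {f g : Ω → ℝ} (hf : Measurable f) (hg : Measurable g)
    (hfv : ∀ ω, f ω = 1 ∨ f ω = -1) (hgv : ∀ ω, g ω = 1 ∨ g ω = -1) :
    Integrable (fun ω => f ω * g ω) := by
  refine MeasureTheory.Integrable.mono' (integrable_const 1) ((hf.mul hg).aestronglyMeasurable) ?_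
  filter_upwards with ω
  rcases hfv ω with h | h <;> rcases hgv ω with h' | h' <;>
    simp [h, h', Real.norm_eq_abs]

/-- Suppes–Zanotti lower bound: -1 ≤ E(XY) + E(YZ) + E(XZ) for ±1-valued
random variables on a common probability space. -/
theorem stmt_1 (Ω : Type) [MeasureSpace Ω] [IsProbabilityMeasure (volume : Measure Ω)]
    (X Y Z : Ω → ℝ) (hX : Measurable X) (hY : Measurable Y) (hZ : Measurable Z)
    (hXv : ∀ ω, X ω = 1 ∨ X ω = -1) (hYv : ∀ ω, Y ω = 1 ∨ Y ω = -1)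
    (hZv : ∀ ω, Z ω = 1 ∨ Z ω = -1) :
    -1 ≤ (∫ ω, X ω * Y ω) + (∫ ω, Y ω * Z ω) + (∫ ω, X ω * Z ω) := by
  have hXY := int_prod hX hY hXv hYv
  have hYZ := int_prod hY hZ hYv hZv
  have hXZ := int_prod hX hZ hXv hZv
  have h2 : Integrable (fun ω => X ω * Y ω + Y ω * Z ω) volume := hXY.add hYZ
  have hsum : (∫ ω, X ω * Y ω) + (∫ ω, Y ω * Z ω) + (∫ ω, X ω * Z ω)
      = ∫ ω, (X ω * Y ω + Y ω * Z ω + X ω * Z ω) := by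
    rw [← integral_add hXY hYZ, ← integral_add h2 hXZ]
  rw [hsum]
  have h1 : (-1 : ℝ) = ∫ _ : Ω, (-1 : ℝ) := by simp
  rw [h1]
  apply integral_mono (integrable_const _) (h2.add hXZ)
  intro ω
  rcases hXv ω with h | h <;> rcases hYv ω with h' | h' <;> rcases hZv ω with h'' | h'' <;>
    simp [h, h', h''] <;> norm_num
end

section
/- If X, Y, Z are ±1-valued random variables on a common probability space, then E(XY) + E(YZ) + E(XZ) ≤ 1 + 2·min{E(XY), E(YZ), E(XZ)}. -/
open MeasureTheory

lemma sz_integrable {Ω : Type} [MeasureSpace Ω] [IsProbabilityMeasure (volume : Measure Ω)]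
    {A B : Ω → ℝ} (hA : Measurable A) (hB : Measurable B)
    (hAv : ∀ ω, A ω = 1 ∨ A ω = -1) (hBv : ∀ ω, B ω = 1 ∨ B ω = -1) :
    Integrable (fun ω => A ω * B ω) := by
  refine (integrable_const (1:ℝ)).mono' ((hA.mul hB).aestronglyMeasurable)
    (Filter.Eventually.of_forall fun ω => ?_)
  rcases hAv ω with h1 | h1 <;> rcases hBv ω with h2 | h2 <;> simp [h1, h2]

lemma sz_key {Ω : Type} [MeasureSpace Ω] [IsProbabilityMeasure (volume : Measure Ω)]
    {A B C : Ω → ℝ} (hA : Measurable A) (hB : Measurable B) (hC : Measurable C)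
    (hAv : ∀ ω, A ω = 1 ∨ A ω = -1) (hBv : ∀ ω, B ω = 1 ∨ B ω = -1)
    (hCv : ∀ ω, C ω = 1 ∨ C ω = -1) :
    (∫ ω, A ω * B ω) + (∫ ω, A ω * C ω) ≤ 1 + (∫ ω, B ω * C ω) := by
  have hAB := sz_integrable hA hB hAv hBv
  have hAC := sz_integrable hA hC hAv hCv
  have hBC := sz_integrable hB hC hBv hCv
  have h1 : (∫ ω, A ω * B ω) + (∫ ω, A ω * C ω) = ∫ ω, (A ω * B ω + A ω * C ω) :=
    (integral_add hAB hAC).symm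
  have h2 : (1:ℝ) + (∫ ω, B ω * C ω) = ∫ ω, (1 + B ω * C ω) := by
    rw [integral_add (integrable_const 1) hBC, integral_const]
    simp
  rw [h1, h2]
  refine integral_mono (hAB.add hAC) ((integrable_const 1).add hBC)
    (fun ω => ?_)
  rcases hAv ω with h1 | h1 <;> rcases hBv ω with h2 | h2 <;> rcases hCv ω with h3 | h3 <;>
    simp [h1, h2, h3] <;> norm_num

/-- Suppes–Zanotti upper bound:
E(XY) + E(YZ) + E(XZ) ≤ 1 + 2·min{E(XY), E(YZ), E(XZ)}. -/
theorem stmt_2 (Ω : Type) [MeasureSpace Ω] [IsProbabilityMeasure (volume : Measure Ω)]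
    (X Y Z : Ω → ℝ) (hX : Measurable X) (hY : Measurable Y) (hZ : Measurable Z)
    (hXv : ∀ ω, X ω = 1 ∨ X ω = -1) (hYv : ∀ ω, Y ω = 1 ∨ Y ω = -1)
    (hZv : ∀ ω, Z ω = 1 ∨ Z ω = -1) :
    (∫ ω, X ω * Y ω) + (∫ ω, Y ω * Z ω) + (∫ ω, X ω * Z ω) ≤
      1 + 2 * min (∫ ω, X ω * Y ω) (min (∫ ω, Y ω * Z ω) (∫ ω, X ω * Z ω)) := by
  have k1 : (∫ ω, Y ω * Z ω) + (∫ ω, X ω * Z ω) ≤ 1 + (∫ ω, X ω * Y ω) := by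
    have := sz_key hZ hY hX hZv hYv hXv
    have e1 : (∫ ω, Z ω * Y ω) = ∫ ω, Y ω * Z ω := by congr 1; ext ω; ring
    have e2 : (∫ ω, Z ω * X ω) = ∫ ω, X ω * Z ω := by congr 1; ext ω; ring
    have e3 : (∫ ω, Y ω * X ω) = ∫ ω, X ω * Y ω := by congr 1; ext ω; ring
    rw [e1, e2, e3] at this; exact this
  have k2 : (∫ ω, X ω * Y ω) + (∫ ω, X ω * Z ω) ≤ 1 + (∫ ω, Y ω * Z ω) :=
    sz_key hX hY hZ hXv hYv hZv
  have k3 : (∫ ω, X ω * Y ω) + (∫ ω, Y ω * Z ω) ≤ 1 + (∫ ω, X ω * Z ω) := by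
    have := sz_key hY hX hZ hYv hXv hZv
    have e1 : (∫ ω, Y ω * X ω) = ∫ ω, X ω * Y ω := by congr 1; ext ω; ring
    rw [e1] at this; exact this
  rcases min_cases (∫ ω, Y ω * Z ω) (∫ ω, X ω * Z ω) with ⟨h, _⟩ | ⟨h, _⟩ <;>
    rw [h] <;>
    rcases min_cases (∫ ω, X ω * Y ω) _ with ⟨h', _⟩ | ⟨h', _⟩ <;> rw [h'] <;> linarith
end

section
/- There is no quantum state ψ and pairwise commuting ±1-eigenvalue observables X̂, Ŷ, Ẑ on any finite-dimensional Hilbert space such that ⟨ψ, X̂Ŷψ⟩ = -1, ⟨ψ, X̂Ẑψ⟩ = -1/2, and ⟨ψ, ŶẐψ⟩ = 0. -/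
/-!
A self-adjoint involution is unitary, so `X ψ` and `Y ψ` are unit vectors with
`⟪X ψ, Y ψ⟫ = ⟪ψ, X Y ψ⟫ = -1`; equality in Cauchy–Schwarz forces `Y ψ = -X ψ`.
Perfect anticorrelation of `X` and `Y` then transfers to every third observable:
`⟪ψ, Y Z ψ⟫ = -⟪ψ, X Z ψ⟫ = 1/2`, which is not `0`.
-/

lemma IsSelfAdjoint.mem_unitary_of_mul_self_eq_one {R : Type*} [Monoid R] [StarMul R] {a : R}
    (ha : IsSelfAdjoint a) (h : a * a = 1) : a ∈ unitary R :=
  Unitary.mem_iff.mpr ⟨by rw [ha.star_eq, h], by rw [ha.star_eq, h]⟩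

section SelfAdjointInvolution

variable {𝕜 H : Type*} [RCLike 𝕜] [NormedAddCommGroup H] [InnerProductSpace 𝕜 H] [CompleteSpace H]

lemma IsSelfAdjoint.inner_mul_apply {A : H →L[𝕜] H} (hA : IsSelfAdjoint A) (B : H →L[𝕜] H)
    (ψ : H) : inner 𝕜 ψ ((A * B) ψ) = inner 𝕜 (A ψ) (B ψ) :=
  (hA.isSymmetric ψ (B ψ)).symm

lemma apply_eq_neg_apply_of_inner_mul_apply_eq_neg_one {X Y : H →L[𝕜] H}
    (hX : IsSelfAdjoint X) (hXu : X ∈ unitary (H →L[𝕜] H)) (hYu : Y ∈ unitary (H →L[𝕜] H))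
    {ψ : H} (hψ : ‖ψ‖ = 1) (hXY : inner 𝕜 ψ ((X * Y) ψ) = -1) : Y ψ = -X ψ := by
  have hXψ : ‖X ψ‖ = 1 := by rw [ContinuousLinearMap.norm_map_of_mem_unitary hXu, hψ]
  have hYψ : ‖Y ψ‖ = 1 := by rw [ContinuousLinearMap.norm_map_of_mem_unitary hYu, hψ]
  rw [hX.inner_mul_apply, inner_eq_neg_one_iff_of_norm_eq_one hXψ hYψ] at hXY
  rw [hXY, neg_neg]

lemma inner_mul_apply_eq_neg_of_inner_mul_apply_eq_neg_one {X Y : H →L[𝕜] H}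
    (hX : IsSelfAdjoint X) (hY : IsSelfAdjoint Y) (hX2 : X * X = 1) (hY2 : Y * Y = 1)
    {ψ : H} (hψ : ‖ψ‖ = 1) (hXY : inner 𝕜 ψ ((X * Y) ψ) = -1) (Z : H →L[𝕜] H) :
    inner 𝕜 ψ ((Y * Z) ψ) = -inner 𝕜 ψ ((X * Z) ψ) := by
  rw [hY.inner_mul_apply, hX.inner_mul_apply,
    apply_eq_neg_apply_of_inner_mul_apply_eq_neg_one hX (hX.mem_unitary_of_mul_self_eq_one hX2)
      (hY.mem_unitary_of_mul_self_eq_one hY2) hψ hXY, inner_neg_left]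

end SelfAdjointInvolution

/-- There is no unit vector ψ and pairwise commuting ±1-eigenvalue observables
X̂, Ŷ, Ẑ on a finite-dimensional Hilbert space with ⟨ψ, X̂Ŷψ⟩ = -1,
⟨ψ, X̂Ẑψ⟩ = -1/2, ⟨ψ, ŶẐψ⟩ = 0. -/
theorem stmt_7 :
    ¬ ∃ (H : Type) (_ : NormedAddCommGroup H) (_ : InnerProductSpace ℂ H)
      (_ : FiniteDimensional ℂ H) (X Y Z : H →L[ℂ] H) (ψ : H),
      IsSelfAdjoint X ∧ IsSelfAdjoint Y ∧ IsSelfAdjoint Z ∧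
      X * X = 1 ∧ Y * Y = 1 ∧ Z * Z = 1 ∧
      Commute X Y ∧ Commute Y Z ∧ Commute X Z ∧
      ‖ψ‖ = 1 ∧
      (inner ℂ ψ ((X * Y) ψ) : ℂ) = -1 ∧
      (inner ℂ ψ ((X * Z) ψ) : ℂ) = -1/2 ∧
      (inner ℂ ψ ((Y * Z) ψ) : ℂ) = 0 := by
  rintro ⟨H, _, _, _, X, Y, Z, ψ, hX, hY, -, hX2, hY2, -, -, -, -, hψ, hXY, hXZ, hYZ⟩
  have : CompleteSpace H := FiniteDimensional.complete ℂ H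
  have hYZ_eq := inner_mul_apply_eq_neg_of_inner_mul_apply_eq_neg_one hX hY hX2 hY2 hψ hXY Z
  rw [hXZ, hYZ] at hYZ_eq
  norm_num at hYZ_eq
end

section
/- Define M⁻(δ) as the sum of absolute values of the negative atoms of the signed measure p_δ (atoms: -1/8-δ, 1/8+δ, 3/16, 3/16, 5/16, 5/16, -δ, δ). Then M⁻(δ) ≥ 1/8 for all real δ, with equality if and only if -1/8 ≤ δ ≤ 0. -/
/-- The one-parameter family of signed measures from the paper. -/
noncomputable def pδ (δ : ℝ) : Bool × Bool × Bool → ℝ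
  | (true, true, true) => -1/8 - δ
  | (false, true, true) => 1/8 + δ
  | (true, false, true) => 3/16
  | (false, true, false) => 3/16
  | (true, true, false) => 5/16
  | (false, false, true) => 5/16
  | (true, false, false) => -δ
  | (false, false, false) => δ

/-- Total negative mass of `pδ`: the sum of absolute values of negative atoms. -/
noncomputable def Mneg (δ : ℝ) : ℝ :=
  ∑ ω : Bool × Bool × Bool, if pδ δ ω < 0 then |pδ δ ω| else 0

/-! Besides the positive atoms `3/16` and `5/16`, the atoms come in pairs `±x` with `x = 1/8 + δ`
and `x = δ`, and a pair `±x` carries negative mass `|x|`. Hence `M⁻(δ) = |1/8 + δ| + |-δ|`, which by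
the triangle inequality is at least `|1/8| = 1/8`, with equality exactly when `1/8 + δ` and `-δ`
have the same sign. -/

lemma ite_neg_abs_eq_negPart {α : Type*} [AddCommGroup α] [LinearOrder α] [IsOrderedAddMonoid α]
    (x : α) : (if x < 0 then |x| else 0) = x⁻ := by
  split_ifs with hx
  · rw [abs_of_neg hx, negPart_eq_neg.mpr hx.le]
  · rw [negPart_eq_zero.mpr (not_lt.mp hx)]

lemma negPart_neg_add_negPart {α : Type*} [AddCommGroup α] [LinearOrder α] [IsOrderedAddMonoid α]
    (x : α) : (-x)⁻ + x⁻ = |x| := by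
  rw [negPart_neg, posPart_add_negPart]

lemma Mneg_eq_abs_add_abs (δ : ℝ) : Mneg δ = |1/8 + δ| + |δ| := by
  have hpos : ∀ c : ℝ, 0 ≤ c → c⁻ = 0 := fun c hc => negPart_eq_zero.mpr hc
  simp only [Mneg, ite_neg_abs_eq_negPart]
  simp only [Fintype.sum_prod_type, Fintype.sum_bool, pδ, hpos (3/16) (by norm_num),
    hpos (5/16) (by norm_num)]
  rw [show -1/8 - δ = -(1/8 + δ) by ring, ← negPart_neg_add_negPart (1/8 + δ),
    ← negPart_neg_add_negPart δ]
  ring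

/-- M⁻(δ) ≥ 1/8 for all δ, with equality iff -1/8 ≤ δ ≤ 0. -/
theorem stmt_11 (δ : ℝ) :
    1/8 ≤ Mneg δ ∧ (Mneg δ = 1/8 ↔ -1/8 ≤ δ ∧ δ ≤ 0) := by
  have hsum : (1/8 + δ) + -δ = 1/8 := by ring
  have htriangle := abs_add_le (1/8 + δ) (-δ)
  have hequality := abs_add_eq_add_abs_iff (1/8 + δ) (-δ)
  rw [hsum, abs_neg, abs_of_pos (by norm_num : (0:ℝ) < 1/8)] at htriangle hequality
  rw [Mneg_eq_abs_add_abs, eq_comm, hequality]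
  refine ⟨htriangle, fun h => ?_, fun h => .inl ⟨by linarith, by linarith⟩⟩
  rcases h with h | h <;> constructor <;> linarith
end

section
/- If a prior p on {-1,1}³ is updated successively by Bayes's rule with likelihood functions each depending only on the product of two coordinates (xy, xz, or yz), then the posterior triple moment E(XYZ) under certain symmetric priors equals the prior triple moment; in particular, for the uniform prior the posterior triple moment is 0 regardless of the likelihoods used. -/
/-- sign value of a coordinate of `{-1,1}³` encoded by a Boolean (`true` = +1). -/
def sgn (b : Bool) : ℝ := if b then 1 else -1

/-- Normalized Bayesian update of a signed weight `p` by a likelihood `L`. -/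
noncomputable def update (L p : Bool × Bool × Bool → ℝ) :
    Bool × Bool × Bool → ℝ :=
  fun ω => L ω * p ω / (∑ ω' : Bool × Bool × Bool, L ω' * p ω')

lemma sgn_not (b : Bool) : sgn (!b) = - sgn b := by cases b <;> simp [sgn]

lemma moment_zero (p : Bool × Bool × Bool → ℝ)
    (hp : ∀ ω : Bool × Bool × Bool, p ω = p (!ω.1, !ω.2.1, !ω.2.2)) :
    (∑ ω : Bool × Bool × Bool, p ω * sgn ω.1 * sgn ω.2.1 * sgn ω.2.2) = 0 := by
  have h1 := hp (true, true, true)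
  have h2 := hp (true, true, false)
  have h3 := hp (true, false, true)
  have h4 := hp (true, false, false)
  simp only [Fintype.sum_prod_type, Fintype.sum_bool, sgn]
  simp at h1 h2 h3 h4 ⊢
  linarith

lemma update_sym (L p : Bool × Bool × Bool → ℝ)
    (hL : ∀ ω : Bool × Bool × Bool, L ω = L (!ω.1, !ω.2.1, !ω.2.2))
    (hp : ∀ ω : Bool × Bool × Bool, p ω = p (!ω.1, !ω.2.1, !ω.2.2)) :
    ∀ ω : Bool × Bool × Bool, update L p ω = update L p (!ω.1, !ω.2.1, !ω.2.2) := by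
  intro ω
  simp only [update]
  rw [← hL ω, ← hp ω]

/-- Successive Bayesian updates by likelihoods depending only on the pair
products xy, xz, yz leave the triple moment of a sign-flip symmetric prior
unchanged; in particular, for the uniform prior the posterior triple moment
is 0 regardless of the likelihoods used. -/
theorem stmt_17 (f g h : ℝ → ℝ) (prior : Bool × Bool × Bool → ℝ)
    (hsym : ∀ ω : Bool × Bool × Bool, prior ω = prior (!ω.1, !ω.2.1, !ω.2.2)) :
    (∑ ω : Bool × Bool × Bool,
        (update (fun ω' => h (sgn ω'.2.1 * sgn ω'.2.2))
          (update (fun ω' => g (sgn ω'.1 * sgn ω'.2.2))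
            (update (fun ω' => f (sgn ω'.1 * sgn ω'.2.1)) prior)) ω)
          * sgn ω.1 * sgn ω.2.1 * sgn ω.2.2) =
      (∑ ω : Bool × Bool × Bool, prior ω * sgn ω.1 * sgn ω.2.1 * sgn ω.2.2) ∧
    (prior = (fun _ => 1/8) →
      (∑ ω : Bool × Bool × Bool,
        (update (fun ω' => h (sgn ω'.2.1 * sgn ω'.2.2))
          (update (fun ω' => g (sgn ω'.1 * sgn ω'.2.2))
            (update (fun ω' => f (sgn ω'.1 * sgn ω'.2.1)) prior)) ω)
          * sgn ω.1 * sgn ω.2.1 * sgn ω.2.2) = 0) := by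
  have hf : ∀ ω : Bool × Bool × Bool,
      (fun ω' : Bool × Bool × Bool => f (sgn ω'.1 * sgn ω'.2.1)) ω
        = (fun ω' : Bool × Bool × Bool => f (sgn ω'.1 * sgn ω'.2.1)) (!ω.1, !ω.2.1, !ω.2.2) := by
    intro ω; simp [sgn_not]
  have hg : ∀ ω : Bool × Bool × Bool,
      (fun ω' : Bool × Bool × Bool => g (sgn ω'.1 * sgn ω'.2.2)) ω
        = (fun ω' : Bool × Bool × Bool => g (sgn ω'.1 * sgn ω'.2.2)) (!ω.1, !ω.2.1, !ω.2.2) := by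
    intro ω; simp [sgn_not]
  have hh : ∀ ω : Bool × Bool × Bool,
      (fun ω' : Bool × Bool × Bool => h (sgn ω'.2.1 * sgn ω'.2.2)) ω
        = (fun ω' : Bool × Bool × Bool => h (sgn ω'.2.1 * sgn ω'.2.2)) (!ω.1, !ω.2.1, !ω.2.2) := by
    intro ω; simp [sgn_not]
  have hq := update_sym _ _ hh (update_sym _ _ hg (update_sym _ _ hf hsym))
  constructor
  · rw [moment_zero _ hq, moment_zero _ hsym]
  · intro _; exact moment_zero _ hq
end
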